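/- Let n ≥ 1 and let A be a set partition of {1,…,n}. Then the depth index of A equals the number of strict inequalities along south-west to north-east antidiagonals of the rank-control matrix of M(A): t(A) = D(A), where D(A) = #{(i,j) : 2 ≤ i ≤ n, 1 ≤ j ≤ n−1, r_{i,j} ≠ r_{i−1,j+1}}. -/

import Mathlib

open Finset
open scoped Classical

noncomputable section

/-- The arcs of a set partition `A` of `{1,…,n}`: pairs `(i,j)` with `i < j`, `i` and `j` in
the same block, and no element of that block strictly between `i` and `j`. -/
noncomputable def arcs (n : ℕ) (A : Finpartition (Finset.Icc 1 n)) : Finset (ℕ × ℕ) :=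
  (Finset.Icc 1 n ×ˢ Finset.Icc 1 n).filter
    (fun p => p.1 < p.2 ∧ ∃ B ∈ A.parts, p.1 ∈ B ∧ p.2 ∈ B ∧
      ∀ k ∈ B, ¬ (p.1 < k ∧ k < p.2))

/-- The depth of a vertex `v`: the number of arcs `(i,j)` with `i < v < j`. -/
noncomputable def vertexDepth (n : ℕ) (A : Finpartition (Finset.Icc 1 n)) (v : ℕ) : ℕ :=
  ((arcs n A).filter (fun p => p.1 < v ∧ v < p.2)).card

/-- The depth of an arc `α = (u,v)`: the number of arcs `(i,j)` with `i < u < v < j`. -/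
noncomputable def arcDepth (n : ℕ) (A : Finpartition (Finset.Icc 1 n)) (α : ℕ × ℕ) : ℕ :=
  ((arcs n A).filter (fun p => p.1 < α.1 ∧ α.2 < p.2)).card

/-- The depth index `t(A) = Σ_{i=1}^m (n−i) − Σ_{v=1}^n depth(v) + Σ_{α} depth(α)`,
where `m` is the number of arcs of `A`. -/
noncomputable def depthIndex (n : ℕ) (A : Finpartition (Finset.Icc 1 n)) : ℤ :=
  (∑ i ∈ Finset.Icc 1 (arcs n A).card, ((n : ℤ) - (i : ℤ)))
    - ∑ v ∈ Finset.Icc 1 n, (vertexDepth n A v : ℤ)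
    + ∑ α ∈ arcs n A, (arcDepth n A α : ℤ)

/-- The intertwining number of `A`: the sum over all unordered pairs of distinct blocks
`{B, C}` of the number of pairs `(b,c) ∈ B × C` with no element of `B ∪ C` strictly between
them.  Since distinct blocks are disjoint, this equals the number of pairs `(x,y)` with
`x < y` lying in different blocks `B ∋ x`, `C ∋ y` such that no element of `B ∪ C` lies
strictly between `x` and `y`. -/
noncomputable def inumber (n : ℕ) (A : Finpartition (Finset.Icc 1 n)) : ℕ :=
  ((Finset.Icc 1 n ×ˢ Finset.Icc 1 n).filter
    (fun p => p.1 < p.2 ∧ ∃ B ∈ A.parts, ∃ C ∈ A.parts, B ≠ C ∧ p.1 ∈ B ∧ p.2 ∈ C ∧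
      ∀ k ∈ B ∪ C, ¬ (p.1 < k ∧ k < p.2))).card

/-- `u` and `v` lie in the same block of `A`. -/
def sameBlock (n : ℕ) (A : Finpartition (Finset.Icc 1 n)) (u v : ℕ) : Prop :=
  ∃ B ∈ A.parts, u ∈ B ∧ v ∈ B

/-- The partner of `v`: `0` if `v` is the minimum of its block, and otherwise the largest
element of the block of `v` smaller than `v`. -/
noncomputable def partner (n : ℕ) (A : Finpartition (Finset.Icc 1 n)) (v : ℕ) : ℕ :=
  ((Finset.Icc 1 n).filter (fun u => u < v ∧ sameBlock n A u v)).sup id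

/-- The partial depth index `t_v(A) = u + #{arcs (i,j) : u < i < j < v}`, where `u` is the
partner of `v`. -/
noncomputable def partialDepthIndex (n : ℕ) (A : Finpartition (Finset.Icc 1 n)) (v : ℕ) : ℕ :=
  partner n A v +
    ((arcs n A).filter (fun p => partner n A v < p.1 ∧ p.2 < v)).card

/-- The partial intertwining number `i_v(A)`: the number of `i` with `u < i < v` (where `u`
is the partner of `v`) such that `i` has no successor in its block, or the successor of `i`
in its block is greater than `v`; i.e. every element of the block of `i` larger than `i`
is larger than `v`. -/
noncomputable def partialInumber (n : ℕ) (A : Finpartition (Finset.Icc 1 n)) (v : ℕ) : ℕ :=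
  ((Finset.Icc 1 n).filter
    (fun i => partner n A v < i ∧ i < v ∧
      ∀ j, sameBlock n A i j → i < j → v < j)).card

/-- The adjacency matrix of `A`: the `n × n` rational matrix whose `(i,j)` entry is `1` if
`(i+1, j+1)` is an arc of `A` (indices shifted from `Fin n` to `{1,…,n}`) and `0` otherwise. -/
noncomputable def adjMatrix (n : ℕ) (A : Finpartition (Finset.Icc 1 n)) :
    Matrix (Fin n) (Fin n) ℚ :=
  fun i j => if ((i : ℕ) + 1, (j : ℕ) + 1) ∈ arcs n A then 1 else 0

/-- The rank-control matrix entry `r_{i,j}` of an `n × n` matrix `M`: the rank of the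
submatrix of `M` consisting of rows `{i, i+1, …, n}` and columns `{1, …, j}`
(in 1-based indexing). -/
noncomputable def rankControl (n : ℕ) (M : Matrix (Fin n) (Fin n) ℚ) (i j : ℕ) : ℕ :=
  (M.submatrix (fun k : {k : Fin n // i ≤ (k : ℕ) + 1} => (k : Fin n))
               (fun l : {l : Fin n // (l : ℕ) + 1 ≤ j} => (l : Fin n))).rank

end

/-! Since `M(A)` is a partial permutation matrix, `r_{i,j}` counts the arcs `(a,b)` with
`i ≤ a` and `b ≤ j`. Hence `r_{i,j} ≠ r_{i-1,j+1}` exactly when some arc starts at `i - 1` and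
ends by `j + 1`, or ends at `j + 1` and starts at or after `i`. Counting these cells arc by arc,
with inclusion–exclusion over pairs of arcs, gives
`D(A) = Σ_α (n - |α|) - #{(α, β) : α₁ < β₁, α₂ ≤ β₂}`, where `|(a,b)| = b - a`.
The depth index reduces to the same expression: `Σ_v depth(v) = Σ_α (|α| - 1)`, and since
left endpoints are distinct, the `m(m-1)/2` pairs with `α₁ < β₁` split into those counted above
and the nested pairs counted by `Σ_α depth(α)`. -/

theorem Matrix.rank_of_ite_eq_card {R C K : Type*} [Fintype R] [Fintype C] [DecidableEq R]
    [Field K] (rel : R → C → Prop) [DecidableRel rel]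
    (hrow : ∀ r r' c, rel r c → rel r' c → r = r')
    (hcol : ∀ r c c', rel r c → rel r c' → c = c') :
    (Matrix.of fun r c => if rel r c then (1 : K) else 0).rank = #{p : R × C | rel p.1 p.2} := by
  set M : Matrix R C K := Matrix.of fun r c => if rel r c then 1 else 0
  set S : Finset (R × C) := {p : R × C | rel p.1 p.2}
  let e : S → R → K := fun p => Pi.single p.1.1 1
  have he : LinearIndependent K e := by
    refine (Pi.linearIndependent_single_one R K).comp (fun p : S => p.1.1) ?_
    rintro ⟨⟨r, c⟩, hp⟩ ⟨⟨r', c'⟩, hp'⟩ (rfl : r = r')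
    simp only [S, mem_filter, mem_univ, true_and] at hp hp'
    cases hcol r c c' hp hp'
    rfl
  have hcol_single : ∀ r c, rel r c → M.col c = Pi.single r 1 := by
    intro r c h
    funext r'
    by_cases hr : r' = r
    · subst hr; simp [M, h]
    · simpa [M, hr] using fun h' => hr (hrow r' r c h' h)
  have hspan : Submodule.span K (Set.range M.col) = Submodule.span K (Set.range e) := by
    apply le_antisymm <;> rw [Submodule.span_le]
    · rintro _ ⟨c, rfl⟩
      by_cases h : ∃ r, rel r c
      · obtain ⟨r, hr⟩ := h
        rw [hcol_single r c hr]
        exact Submodule.subset_span ⟨⟨(r, c), by simpa [S] using hr⟩, rfl⟩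
      · push Not at h
        have hzero : M.col c = 0 := funext fun r => by simp [M, h r]
        rw [hzero]
        exact Submodule.zero_mem _
    · rintro _ ⟨⟨⟨r, c⟩, hp⟩, rfl⟩
      simp only [S, mem_filter, mem_univ, true_and] at hp
      exact Submodule.subset_span ⟨c, hcol_single r c hp⟩
  rw [Matrix.rank_eq_finrank_span_cols, hspan, finrank_span_eq_card he, Fintype.card_coe]

theorem sum_card_filter_lt_eq_sum_range {ι α : Type*} [DecidableEq ι] [LinearOrder α]
    {f : ι → α} (s : Finset ι) (hf : Set.InjOn f s) :
    ∑ y ∈ s, #{x ∈ s | f x < f y} = ∑ i ∈ range #s, i := by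
  induction s using Finset.induction_on_max_value f with
  | empty => simp
  | insert a s ha hmax ih =>
    have hlt : ∀ x ∈ s, f x < f a := fun x hx =>
      (hmax x hx).lt_of_ne fun h => ha (hf (mem_insert_of_mem hx) (mem_insert_self a s) h ▸ hx)
    have below_a : {x ∈ insert a s | f x < f a} = s := by
      rw [filter_insert, if_neg (lt_irrefl _), filter_true_of_mem hlt]
    have below_y : ∀ y ∈ s, #{x ∈ insert a s | f x < f y} = #{x ∈ s | f x < f y} :=
      fun y hy => by rw [filter_insert, if_neg (hmax y hy).not_gt]
    rw [sum_insert ha, below_a, sum_congr rfl below_y,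
      ih (hf.mono (coe_subset.2 (subset_insert a s))), card_insert_of_notMem ha, sum_range_succ,
      add_comm]

theorem sum_Icc_one_intCast (m : ℕ) : ∑ i ∈ Icc 1 m, (i : ℤ) = ∑ i ∈ range m, (i : ℤ) + m := by
  induction m with
  | zero => simp
  | succ k ih => rw [sum_Icc_succ_top (by omega), ih, sum_range_succ]

section Arcs

variable {n : ℕ} {A : Finpartition (Icc 1 n)} {p q : ℕ × ℕ}

theorem bounds_of_mem_arcs (hp : p ∈ arcs n A) : 1 ≤ p.1 ∧ p.1 < p.2 ∧ p.2 ≤ n := by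
  simp only [arcs, mem_filter, mem_product, mem_Icc] at hp
  exact ⟨hp.1.1.1, hp.2.1, hp.1.2.2⟩

theorem eq_of_mem_arcs_of_fst_eq (hp : p ∈ arcs n A) (hq : q ∈ arcs n A) (h : p.1 = q.1) :
    p = q := by
  simp only [arcs, mem_filter] at hp hq
  obtain ⟨-, hpq, B, hB, hp₁, hp₂, hp_gap⟩ := hp
  obtain ⟨-, hqq, C, hC, hq₁, hq₂, hq_gap⟩ := hq
  obtain rfl : B = C := A.eq_of_mem_parts hB hC hp₁ (h ▸ hq₁)
  refine Prod.ext h (le_antisymm ?_ ?_)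
  · exact not_lt.1 fun hlt => hp_gap q.2 hq₂ ⟨h ▸ hqq, hlt⟩
  · exact not_lt.1 fun hlt => hq_gap p.2 hp₂ ⟨h ▸ hpq, hlt⟩

theorem eq_of_mem_arcs_of_snd_eq (hp : p ∈ arcs n A) (hq : q ∈ arcs n A) (h : p.2 = q.2) :
    p = q := by
  simp only [arcs, mem_filter] at hp hq
  obtain ⟨-, hpq, B, hB, hp₁, hp₂, hp_gap⟩ := hp
  obtain ⟨-, hqq, C, hC, hq₁, hq₂, hq_gap⟩ := hq
  obtain rfl : B = C := A.eq_of_mem_parts hB hC hp₂ (h ▸ hq₂)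
  refine Prod.ext (le_antisymm ?_ ?_) h
  · exact not_lt.1 fun hlt => hq_gap p.1 hp₁ ⟨hlt, h ▸ hpq⟩
  · exact not_lt.1 fun hlt => hp_gap q.1 hq₁ ⟨hlt, h ▸ hqq⟩

end Arcs

section Counting

variable (n : ℕ) (A : Finpartition (Icc 1 n))

theorem rankControl_adjMatrix (i j : ℕ) :
    rankControl n (adjMatrix n A) i j = #{p ∈ arcs n A | i ≤ p.1 ∧ p.2 ≤ j} := by
  change (Matrix.of fun (k : {k : Fin n // i ≤ (k : ℕ) + 1})
    (l : {l : Fin n // (l : ℕ) + 1 ≤ j}) =>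
      if ((k : ℕ) + 1, (l : ℕ) + 1) ∈ arcs n A then (1 : ℚ) else 0).rank = _
  rw [Matrix.rank_of_ite_eq_card]
  · refine card_bij (fun x _ => (((x.1 : Fin n) : ℕ) + 1, ((x.2 : Fin n) : ℕ) + 1)) ?_ ?_ ?_
    · rintro ⟨k, l⟩ hkl
      simp only [mem_filter, mem_univ, true_and] at hkl ⊢
      exact ⟨hkl, k.2, l.2⟩
    · rintro ⟨k, l⟩ - ⟨k', l'⟩ - h
      simp only [Prod.mk.injEq, add_left_inj] at h
      simp only [Prod.mk.injEq, Subtype.ext_iff, Fin.ext_iff]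
      exact h
    · rintro ⟨a, b⟩ hab
      obtain ⟨hmem, hia, hbj⟩ := mem_filter.1 hab
      obtain ⟨ha, hab, hb⟩ := bounds_of_mem_arcs hmem
      refine ⟨(⟨⟨a - 1, by omega⟩, by simp only at hia ⊢; omega⟩,
        ⟨⟨b - 1, by omega⟩, by simp only at hbj ⊢; omega⟩), ?_, ?_⟩
      · simpa [Nat.sub_add_cancel ha, Nat.sub_add_cancel (by omega : 1 ≤ b)] using hmem
      · simp only [Prod.mk.injEq]; omega
  · intro k k' l hk hk'
    have := congrArg Prod.fst (eq_of_mem_arcs_of_snd_eq hk hk' rfl)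
    simp only [add_left_inj] at this
    exact Subtype.ext (Fin.ext this)
  · intro k l l' hl hl'
    have := congrArg Prod.snd (eq_of_mem_arcs_of_fst_eq hl hl' rfl)
    simp only [add_left_inj] at this
    exact Subtype.ext (Fin.ext this)

theorem rankControl_adjMatrix_ne_iff (i j : ℕ) :
    rankControl n (adjMatrix n A) i j ≠ rankControl n (adjMatrix n A) (i - 1) (j + 1) ↔
      (∃ p ∈ arcs n A, p.1 + 1 = i ∧ p.2 ≤ j + 1) ∨ (∃ p ∈ arcs n A, i ≤ p.1 ∧ p.2 = j + 1) := by
  rw [rankControl_adjMatrix, rankControl_adjMatrix]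
  set F := {p ∈ arcs n A | i ≤ p.1 ∧ p.2 ≤ j}
  set F' := {p ∈ arcs n A | i - 1 ≤ p.1 ∧ p.2 ≤ j + 1}
  have hsub : F ⊆ F' := monotone_filter_right _ fun p _ hp => ⟨by omega, by omega⟩
  have hcard : #F ≠ #F' ↔ F ⊂ F' :=
    ⟨fun h => hsub.ssubset_of_ne fun h' => h (h' ▸ rfl), fun h => (card_lt_card h).ne⟩
  rw [hcard, ssubset_iff_of_subset hsub]
  simp only [F, F', mem_filter, not_and, not_le]
  constructor
  · rintro ⟨p, ⟨hp, hip, hpj⟩, hnot⟩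
    by_cases h : i ≤ p.1
    · exact Or.inr ⟨p, hp, h, by have := hnot hp h; omega⟩
    · exact Or.inl ⟨p, hp, by omega, hpj⟩
  · rintro (⟨p, hp, hpi, hpj⟩ | ⟨p, hp, hip, hpj⟩)
    · exact ⟨p, ⟨hp, by omega, hpj⟩, fun _ h => by omega⟩
    · exact ⟨p, ⟨hp, by omega, by omega⟩, fun _ _ => by omega⟩

theorem card_cells_right_of_arc_start :
    (#{c ∈ Icc 2 n ×ˢ Icc 1 (n - 1) | ∃ p ∈ arcs n A, p.1 + 1 = c.1 ∧ p.2 ≤ c.2 + 1} : ℤ) =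
      ∑ p ∈ arcs n A, ((n : ℤ) + 1 - p.2) := by
  have hcells :
      {c ∈ Icc 2 n ×ˢ Icc 1 (n - 1) | ∃ p ∈ arcs n A, p.1 + 1 = c.1 ∧ p.2 ≤ c.2 + 1} =
        (arcs n A).biUnion fun p => {p.1 + 1} ×ˢ Icc (p.2 - 1) (n - 1) := by
    ext ⟨i, j⟩
    simp only [mem_filter, mem_product, mem_Icc, mem_biUnion, mem_singleton]
    constructor
    · rintro ⟨⟨-, -, hjn⟩, p, hp, hpi, hpj⟩
      exact ⟨p, hp, hpi.symm, by omega, hjn⟩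
    · rintro ⟨p, hp, hpi, hpj, hjn⟩
      have := bounds_of_mem_arcs hp
      exact ⟨⟨⟨by omega, by omega⟩, by omega, hjn⟩, p, hp, by omega, by omega⟩
  rw [hcells, card_biUnion, Nat.cast_sum]
  · refine sum_congr rfl fun p hp => ?_
    have := bounds_of_mem_arcs hp
    rw [card_product, card_singleton, Nat.card_Icc]
    omega
  · intro p hp q hq hne
    refine disjoint_left.2 fun c hcp hcq => hne (eq_of_mem_arcs_of_fst_eq hp hq ?_)
    simp only [mem_product, mem_singleton] at hcp hcq
    omega

theorem card_cells_above_arc_end :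
    (#{c ∈ Icc 2 n ×ˢ Icc 1 (n - 1) | ∃ p ∈ arcs n A, c.1 ≤ p.1 ∧ p.2 = c.2 + 1} : ℤ) =
      ∑ p ∈ arcs n A, ((p.1 : ℤ) - 1) := by
  have hcells :
      {c ∈ Icc 2 n ×ˢ Icc 1 (n - 1) | ∃ p ∈ arcs n A, c.1 ≤ p.1 ∧ p.2 = c.2 + 1} =
        (arcs n A).biUnion fun p => Icc 2 p.1 ×ˢ {p.2 - 1} := by
    ext ⟨i, j⟩
    simp only [mem_filter, mem_product, mem_Icc, mem_biUnion, mem_singleton]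
    constructor
    · rintro ⟨⟨⟨hi, -⟩, -⟩, p, hp, hip, hpj⟩
      exact ⟨p, hp, ⟨hi, hip⟩, by omega⟩
    · rintro ⟨p, hp, ⟨hi, hip⟩, hpj⟩
      have := bounds_of_mem_arcs hp
      exact ⟨⟨⟨hi, by omega⟩, by omega, by omega⟩, p, hp, hip, by omega⟩
  rw [hcells, card_biUnion, Nat.cast_sum]
  · refine sum_congr rfl fun p hp => ?_
    have := bounds_of_mem_arcs hp
    rw [card_product, card_singleton, Nat.card_Icc]
    omega
  · intro p hp q hq hne
    refine disjoint_left.2 fun c hcp hcq => hne (eq_of_mem_arcs_of_snd_eq hp hq ?_)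
    have := bounds_of_mem_arcs hp
    have := bounds_of_mem_arcs hq
    simp only [mem_product, mem_singleton] at hcp hcq
    omega

theorem card_cells_between_arcs :
    #{c ∈ Icc 2 n ×ˢ Icc 1 (n - 1) | (∃ p ∈ arcs n A, p.1 + 1 = c.1 ∧ p.2 ≤ c.2 + 1) ∧
        ∃ q ∈ arcs n A, c.1 ≤ q.1 ∧ q.2 = c.2 + 1} =
      ∑ q ∈ arcs n A, #{p ∈ arcs n A | p.1 < q.1 ∧ p.2 ≤ q.2} := by
  have hsum : #{x ∈ arcs n A ×ˢ arcs n A | x.1.1 < x.2.1 ∧ x.1.2 ≤ x.2.2} =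
      ∑ q ∈ arcs n A, #{p ∈ arcs n A | p.1 < q.1 ∧ p.2 ≤ q.2} := by
    simp only [card_filter, sum_product_right]
  rw [← hsum, eq_comm]
  refine card_bij (fun x _ => (x.1.1 + 1, x.2.2 - 1)) ?_ ?_ ?_
  · rintro ⟨p, q⟩ hpq
    obtain ⟨⟨hp, hq⟩, hpq₁, hpq₂⟩ := by simpa only [mem_filter, mem_product] using hpq
    have := bounds_of_mem_arcs hp
    have := bounds_of_mem_arcs hq
    simp only [mem_filter, mem_product, mem_Icc]
    exact ⟨⟨⟨by omega, by omega⟩, by omega, by omega⟩, ⟨p, hp, rfl, by omega⟩, q, hq, by omega,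
      by omega⟩
  · rintro ⟨p, q⟩ hpq ⟨p', q'⟩ hpq' h
    simp only [mem_filter, mem_product] at hpq hpq'
    have := bounds_of_mem_arcs hpq.1.2
    have := bounds_of_mem_arcs hpq'.1.2
    simp only [Prod.mk.injEq] at h ⊢
    exact ⟨eq_of_mem_arcs_of_fst_eq hpq.1.1 hpq'.1.1 (by omega),
      eq_of_mem_arcs_of_snd_eq hpq.1.2 hpq'.1.2 (by omega)⟩
  · rintro ⟨i, j⟩ hij
    simp only [mem_filter, mem_product, mem_Icc] at hij
    obtain ⟨⟨⟨hi, -⟩, hj, -⟩, ⟨p, hp, hpi, hpj⟩, q, hq, hiq, hqj⟩ := hij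
    refine ⟨(p, q), ?_, ?_⟩
    · simp only [mem_filter, mem_product]
      exact ⟨⟨hp, hq⟩, by omega, by omega⟩
    · simp only [Prod.mk.injEq]
      omega

theorem sum_vertexDepth :
    ∑ v ∈ Icc 1 n, (vertexDepth n A v : ℤ) = ∑ p ∈ arcs n A, ((p.2 : ℤ) - p.1 - 1) := by
  simp only [vertexDepth, card_filter, Nat.cast_sum, Nat.cast_ite, Nat.cast_one, Nat.cast_zero]
  rw [sum_comm]
  refine sum_congr rfl fun p hp => ?_
  have := bounds_of_mem_arcs hp
  have hIoo : {v ∈ Icc 1 n | p.1 < v ∧ v < p.2} = Ioo p.1 p.2 := by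
    ext v
    simp only [mem_filter, mem_Icc, mem_Ioo]
    omega
  rw [sum_boole, hIoo, Nat.card_Ioo]
  omega

theorem card_filter_fst_lt_snd_le_add_arcDepth (q : ℕ × ℕ) :
    #{p ∈ arcs n A | p.1 < q.1 ∧ p.2 ≤ q.2} + arcDepth n A q = #{p ∈ arcs n A | p.1 < q.1} := by
  rw [arcDepth, ← card_filter_add_card_filter_not (s := {p ∈ arcs n A | p.1 < q.1})
    (fun p => p.2 ≤ q.2), filter_filter, filter_filter]
  simp only [not_le]

theorem depthIndex_eq_sum_arcs :
    depthIndex n A = ∑ p ∈ arcs n A, ((n : ℤ) - (p.2 - p.1)) -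
      ∑ q ∈ arcs n A, (#{p ∈ arcs n A | p.1 < q.1 ∧ p.2 ≤ q.2} : ℤ) := by
  have hpairs : ∑ q ∈ arcs n A, (#{p ∈ arcs n A | p.1 < q.1 ∧ p.2 ≤ q.2} : ℤ) +
      ∑ q ∈ arcs n A, (arcDepth n A q : ℤ) = ∑ i ∈ range #(arcs n A), (i : ℤ) := by
    have h := (sum_congr rfl fun q _ => card_filter_fst_lt_snd_le_add_arcDepth n A q).trans
      (sum_card_filter_lt_eq_sum_range _ fun p hp q hq => eq_of_mem_arcs_of_fst_eq hp hq)
    simpa only [Nat.cast_add, Nat.cast_sum, sum_add_distrib] using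
      congrArg (Nat.cast : ℕ → ℤ) h
  have hgauss := sum_Icc_one_intCast #(arcs n A)
  rw [depthIndex, sum_vertexDepth]
  simp only [sum_sub_distrib, sum_const, nsmul_eq_mul, Nat.card_Icc, Nat.add_sub_cancel]
    at hgauss ⊢
  linarith

theorem card_rankControl_ne_eq_sum_arcs :
    (#{c ∈ Icc 2 n ×ˢ Icc 1 (n - 1) | rankControl n (adjMatrix n A) c.1 c.2 ≠
        rankControl n (adjMatrix n A) (c.1 - 1) (c.2 + 1)} : ℤ) =
      ∑ p ∈ arcs n A, ((n : ℤ) - (p.2 - p.1)) -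
        ∑ q ∈ arcs n A, (#{p ∈ arcs n A | p.1 < q.1 ∧ p.2 ≤ q.2} : ℤ) := by
  rw [filter_congr fun c _ => rankControl_adjMatrix_ne_iff n A c.1 c.2, filter_or]
  have hD := card_union_add_card_inter
    {c ∈ Icc 2 n ×ˢ Icc 1 (n - 1) | ∃ p ∈ arcs n A, p.1 + 1 = c.1 ∧ p.2 ≤ c.2 + 1}
    {c ∈ Icc 2 n ×ˢ Icc 1 (n - 1) | ∃ p ∈ arcs n A, c.1 ≤ p.1 ∧ p.2 = c.2 + 1}
  rw [← filter_and, card_cells_between_arcs] at hD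
  replace hD := congrArg (Nat.cast : ℕ → ℤ) hD
  have hstart := card_cells_right_of_arc_start n A
  have hend := card_cells_above_arc_end n A
  simp only [Nat.cast_add, Nat.cast_sum, sum_sub_distrib, sum_add_distrib, sum_const,
    nsmul_eq_mul] at hD hstart hend ⊢
  linarith

end Counting

theorem depthIndex_eq_D_general (n : ℕ) (A : Finpartition (Finset.Icc 1 n)) :
    depthIndex n A =
      (((Finset.Icc 2 n ×ˢ Finset.Icc 1 (n - 1))).filter
        (fun p => rankControl n (adjMatrix n A) p.1 p.2 ≠
          rankControl n (adjMatrix n A) (p.1 - 1) (p.2 + 1))).card := by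
  rw [depthIndex_eq_sum_arcs, card_rankControl_ne_eq_sum_arcs]

/-- For `n ≥ 1` and a set partition `A` of `{1,…,n}`, the depth index of
`A` equals the number of strict inequalities along south-west to north-east antidiagonals
of the rank-control matrix of `M(A)`:
`t(A) = D(A) = #{(i,j) : 2 ≤ i ≤ n, 1 ≤ j ≤ n−1, r_{i,j} ≠ r_{i−1,j+1}}`. -/
theorem depthIndex_eq_D (n : ℕ) (hn : 1 ≤ n) (A : Finpartition (Finset.Icc 1 n)) :
    depthIndex n A =
      (((Finset.Icc 2 n ×ˢ Finset.Icc 1 (n - 1))).filter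
        (fun p => rankControl n (adjMatrix n A) p.1 p.2 ≠
          rankControl n (adjMatrix n A) (p.1 - 1) (p.2 + 1))).card :=
  depthIndex_eq_D_general n A
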